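/- arXiv:0909.4793 — 2 statements merged into one kernel-verified Lean document; each statement's English description precedes it below -/
import Mathlib

section
/- Fix a nonzero constant A ∈ ℂ. The multiplicative action of W(F_4) on (ℂ^*)^4/∼, where ∼ identifies z with −z (simultaneous sign flip of all coordinates), defined on generators by: s_{e_1−e_2} swapping z_1, z_2; s_{e_2−e_3} swapping z_2, z_3; s_{−e_1} sending z_1 to A/z_1; and s_{(e_1+e_2+e_3+e_4)/2} sending each z_j to A z_j/√(z_1 z_2 z_3 z_4); is a well-defined faithful group action. -/
open scoped RealInnerProductSpace
open Finset

/-- Standard basis vector `e j` of `ℝ⁴`. -/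
noncomputable def e4 (j : Fin 4) : EuclideanSpace ℝ (Fin 4) := EuclideanSpace.single j 1

/-- The F₄ root system. -/
def F4Roots : Set (EuclideanSpace ℝ (Fin 4)) :=
  {x | (∃ j : Fin 4, x = e4 j ∨ x = -e4 j) ∨
    (∃ ε : Fin 4 → ℝ, (∀ i, ε i = 1 ∨ ε i = -1) ∧
      x = (1 / 2 : ℝ) • ∑ i : Fin 4, ε i • e4 i) ∨
    (∃ j k : Fin 4, j < k ∧ ∃ a b : ℝ, (a = 1 ∨ a = -1) ∧ (b = 1 ∨ b = -1) ∧
      x = a • e4 j + b • e4 k)}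

/-- The set of reflections `s_α` (as linear automorphisms of `ℝ⁴`) for `α` in a set `S`. -/
def reflections (S : Set (EuclideanSpace ℝ (Fin 4))) :
    Set (EuclideanSpace ℝ (Fin 4) ≃ₗ[ℝ] EuclideanSpace ℝ (Fin 4)) :=
  {g | ∃ α ∈ S, α ≠ 0 ∧ ∀ β, g β = β - (2 * ⟪α, β⟫ / ⟪α, α⟫) • α}

/-- The Weyl group of type F₄, generated by all reflections of the root system. -/
noncomputable def WF4 : Subgroup (EuclideanSpace ℝ (Fin 4) ≃ₗ[ℝ] EuclideanSpace ℝ (Fin 4)) :=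
  Subgroup.closure (reflections F4Roots)

/-- The equivalence relation on `(ℂ*)⁴` identifying `z` with `-z`
(simultaneous sign flip of all coordinates). -/
def negSetoid : Setoid (Fin 4 → ℂˣ) where
  r z w := w = z ∨ w = -z
  iseqv := by
    constructor
    · intro z; exact Or.inl rfl
    · rintro z w (rfl | rfl)
      · exact Or.inl rfl
      · exact Or.inr (neg_neg z).symm
    · rintro x y z (rfl | rfl) h
      · exact h
      · rcases h with rfl | rfl
        · exact Or.inr rfl
        · exact Or.inl (neg_neg x)

/-- The quotient `(ℂ*)⁴/∼` where `z ∼ -z`. -/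
def CStar4Quot := Quotient negSetoid

/-!
The action is dual to the linear action of `W(F₄)` on the lattice `D₄ = {n ∈ ℤ⁴ | ∑ nᵢ even}`.
Every root of `F₄` pairs integrally with `D₄` and has its coroot `2α/⟪α, α⟫` in `D₄`, so every
reflection, hence all of `W(F₄)`, preserves `D₄`, and `W(F₄)` acts on the torus `Hom(D₄, ℂˣ)` by
`χ ↦ χ ∘ w⁻¹`. Restricting the characters `n ↦ ∏ uᵢ ^ nᵢ` of `ℤ⁴` identifies `(ℂˣ)⁴/±1` with
`Hom(D₄, ℂˣ)`: the characters of `ℤ⁴` trivial on `D₄` are `u = ±(1, 1, 1, 1)`, and every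
character of `D₄` extends because units of `ℂ` have square roots. After the rescaling `z ↦ z/a`,
where `a² = A`, the dual actions of the simple reflections become the two swaps, `z₁ ↦ A/z₁` and
`zⱼ ↦ A zⱼ/√(z₁z₂z₃z₄)`. The action is faithful because `D₄` spans `ℝ⁴` and the characters `n ↦ ∏ (2 ^ mᵢ) ^ nᵢ`
separate the points of `D₄` (at `m = n` the value is `2 ^ ∑ nᵢ²`).
-/

namespace WeylF4

section Characters

def evenSumLattice (ι : Type*) [Fintype ι] : AddSubgroup (ι → ℤ) where
  carrier := {n | Even (∑ i, n i)}
  zero_mem' := by simp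
  add_mem' := by
    intro m n hm hn
    simpa only [Set.mem_ofPred_eq, Pi.add_apply, sum_add_distrib] using hm.add hn
  neg_mem' := by
    intro n hn
    simpa only [Set.mem_ofPred_eq, Pi.neg_apply, sum_neg_distrib, even_neg] using hn

variable {ι : Type*} [Fintype ι]

@[simp]
lemma mem_evenSumLattice {n : ι → ℤ} : n ∈ evenSumLattice ι ↔ Even (∑ i, n i) := Iff.rfl

lemma even_sum_mul_iff {η n : ι → ℤ} (hη : ∀ i, Odd (η i)) :
    Even (∑ i, η i * n i) ↔ Even (∑ i, n i) := by
  have hdiff : Even (∑ i, η i * n i - ∑ i, n i) := by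
    rw [← sum_sub_distrib]
    exact even_sum _ fun i _ => by
      rw [← sub_one_mul]; exact ((hη i).sub_odd odd_one).mul_right _
  exact ⟨fun h => by simpa using h.sub hdiff, fun h => by simpa using h.add hdiff⟩

variable {G : Type*} [CommGroup G]

def monomialChar (u : ι → G) : (ι → ℤ) →+ Additive G where
  toFun n := Additive.ofMul (∏ i, u i ^ n i)
  map_zero' := by simp
  map_add' m n := by simp [zpow_add, prod_mul_distrib]

@[simp]
lemma toMul_monomialChar (u : ι → G) (n : ι → ℤ) :
    (monomialChar u n).toMul = ∏ i, u i ^ n i := rfl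

lemma monomialChar_comp_perm (u : ι → G) (σ : Equiv.Perm ι) (n : ι → ℤ) :
    monomialChar u (n ∘ σ) = monomialChar (u ∘ σ.symm) n := by
  apply Additive.toMul.injective
  simpa using Equiv.prod_comp σ fun i => u (σ.symm i) ^ n i

lemma monomialChar_update_neg [DecidableEq ι] (u : ι → G) (n : ι → ℤ) (i : ι) :
    monomialChar u (Function.update n i (-n i)) = monomialChar (Function.update u i (u i)⁻¹) n := by
  apply Additive.toMul.injective
  simp only [toMul_monomialChar]
  refine prod_congr rfl fun j _ => ?_
  rcases eq_or_ne j i with rfl | hj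
  · simp [zpow_neg]
  · simp [Function.update_of_ne hj]

lemma prod_zpow_eq_zpow_sum (t : G) (n : ι → ℤ) : ∏ i, t ^ n i = t ^ ∑ i, n i := by
  simpa using congrArg Additive.toMul (sum_smul (x := Additive.ofMul t) (s := univ) (f := n)).symm

lemma monomialChar_sub_const (u : ι → G) {n : ι → ℤ} {m : ℤ} (hm : ∑ i, n i = 2 * m) {t : G}
    (ht : t ^ 2 = ∏ i, u i) :
    monomialChar u (n - fun _ => m) = monomialChar (fun i => u i * t⁻¹) n := by
  apply Additive.toMul.injective
  have ht' : t ^ ∑ i, n i = (∏ i, u i) ^ m := by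
    rw [hm, zpow_mul, ← ht]; norm_cast
  simp only [toMul_monomialChar, Pi.sub_apply, zpow_sub, prod_zpow, mul_zpow, inv_zpow,
    prod_mul_distrib, prod_inv_distrib, prod_zpow_eq_zpow_sum, ht']

@[simp]
lemma monomialChar_single [DecidableEq ι] (u : ι → G) (i : ι) (k : ℤ) :
    monomialChar u (Pi.single i k) = Additive.ofMul (u i ^ k) := by
  apply Additive.toMul.injective
  simp [Pi.single_apply]

lemma eq_zero_of_forall_monomialChar_eq_zero {a : G} (ha : ¬IsOfFinOrder a) {n : ι → ℤ}
    (h : ∀ u : ι → G, monomialChar u n = 0) : n = 0 := by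
  have hpow : a ^ ∑ i, n i * n i = a ^ (0 : ℤ) := by
    simpa [← zpow_mul, prod_zpow_eq_zpow_sum] using congrArg Additive.toMul (h fun i => a ^ n i)
  have hsq : ∑ i, n i * n i = 0 := injective_zpow_iff_not_isOfFinOrder.mpr ha hpow
  funext i
  exact mul_self_eq_zero.mp <|
    (sum_eq_zero_iff_of_nonneg fun j _ => mul_self_nonneg (n j)).mp hsq i (mem_univ i)

def torusChar (u : ι → G) : evenSumLattice ι →+ Additive G :=
  (monomialChar u).comp (evenSumLattice ι).subtype

lemma torusChar_apply (u : ι → G) (n : evenSumLattice ι) :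
    torusChar u n = monomialChar u n := rfl

lemma torusChar_surjective [DecidableEq ι] [Nonempty ι] (hG : ∀ x : G, IsSquare x) :
    Function.Surjective (torusChar (ι := ι) (G := G)) := by
  intro χ
  obtain ⟨i₀⟩ := ‹Nonempty ι›
  let p : ι → evenSumLattice ι := fun j => ⟨Pi.single i₀ 1 + Pi.single j 1, by
    simp [sum_add_distrib]⟩
  -- `χ` is determined by its values on the generators `p j = e i₀ + e j` of the lattice
  obtain ⟨s, hs⟩ := hG (χ (p i₀)).toMul
  refine ⟨fun j => (χ (p j)).toMul * s⁻¹, AddMonoidHom.ext fun ⟨n, hn⟩ => ?_⟩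
  obtain ⟨m, hm⟩ := hn
  have hdecomp : (⟨n, ⟨m, hm⟩⟩ : evenSumLattice ι) = ∑ j, n j • p j - m • p i₀ := by
    ext k
    by_cases hk : k = i₀ <;> simp [p, Pi.single_apply, hk, sum_add_distrib, hm]
  apply Additive.toMul.injective
  conv_rhs => rw [hdecomp]
  have hs' : s ^ ∑ i, n i = (s * s) ^ m := by rw [hm, zpow_add, mul_zpow]
  simp only [torusChar_apply, toMul_monomialChar, map_sub, map_sum, map_zsmul, toMul_sub, toMul_sum,
    toMul_zsmul, hs, mul_zpow, inv_zpow, prod_mul_distrib, prod_inv_distrib,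
    prod_zpow_eq_zpow_sum, hs', div_eq_mul_inv]

end Characters

section Units

variable {ι : Type*} [Fintype ι] {R : Type*} [CommRing R]

lemma monomialChar_neg (u : ι → Rˣ) {n : ι → ℤ} (hn : Even (∑ i, n i)) :
    monomialChar (-u) n = monomialChar u n := by
  apply Additive.toMul.injective
  have hsign : ∏ i, (-1 : Rˣ) ^ n i = 1 := by rw [prod_zpow_eq_zpow_sum, hn.neg_one_zpow]
  simp only [toMul_monomialChar, Pi.neg_apply, neg_eq_neg_one_mul (u _), mul_zpow,
    prod_mul_distrib, hsign, one_mul]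

lemma torusChar_neg (u : ι → Rˣ) : torusChar (-u) = torusChar u :=
  AddMonoidHom.ext fun n => monomialChar_neg u n.2

lemma torusChar_eq_torusChar_iff [DecidableEq ι] [Nonempty ι] [NoZeroDivisors R] {u v : ι → Rˣ} :
    torusChar u = torusChar v ↔ v = u ∨ v = -u := by
  refine ⟨fun h => ?_, by rintro (rfl | rfl) <;> simp [torusChar_neg]⟩
  obtain ⟨i₀⟩ := ‹Nonempty ι›
  have hpair : ∀ j, u i₀ * u j = v i₀ * v j := by
    intro j
    have hmem : Pi.single i₀ 1 + Pi.single j 1 ∈ evenSumLattice ι := by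
      simp [sum_add_distrib]
    simpa [torusChar_apply] using congrArg Additive.toMul (DFunLike.congr_fun h ⟨_, hmem⟩)
  rcases Units.eq_or_eq_neg_of_sq_eq_sq _ _ (by simpa [sq] using (hpair i₀).symm) with h₀ | h₀
  · left
    funext j
    simpa [h₀] using (hpair j).symm
  · right
    funext j
    have hj := (hpair j).symm
    rw [h₀, neg_mul] at hj
    exact mul_left_cancel (a := u i₀) (by rw [Pi.neg_apply, mul_neg, ← hj, neg_neg])

end Units

section Lattice

variable {R E : Type*} [Ring R] [AddCommGroup E] [Module R E]

def latticeStabilizer (L : AddSubgroup E) : Subgroup (E ≃ₗ[R] E) where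
  carrier := {g | ∀ v, g v ∈ L ↔ v ∈ L}
  one_mem' _ := Iff.rfl
  mul_mem' hg hh v := (hg _).trans (hh v)
  inv_mem' {g} hg v := by
    rw [← hg, show g (g⁻¹ v) = v from g.apply_symm_apply v]

variable {L : AddSubgroup E}

lemma symm_apply_mem_of_mem_latticeStabilizer (g : latticeStabilizer (R := R) L) {v : E}
    (hv : v ∈ L) : g.1.symm v ∈ L :=
  (g.2 _).1 (by simpa using hv)

def restrictToLattice (g : latticeStabilizer (R := R) L) : L ≃+ L where
  toFun v := ⟨g.1 v.1, (g.2 v.1).2 v.2⟩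
  invFun v := ⟨g.1.symm v.1, symm_apply_mem_of_mem_latticeStabilizer g v.2⟩
  left_inv v := Subtype.ext (g.1.symm_apply_apply v.1)
  right_inv v := Subtype.ext (g.1.apply_symm_apply v.1)
  map_add' v w := Subtype.ext (map_add g.1 v.1 w.1)

variable (N : Type*) [AddCommMonoid N]

def latticeDualAction : latticeStabilizer (R := R) L →* Equiv.Perm (L →+ N) where
  toFun g := (restrictToLattice g).addMonoidHomCongrLeftEquiv
  map_one' := rfl
  map_mul' _ _ := rfl

variable {N}

lemma latticeDualAction_apply (g : latticeStabilizer (R := R) L) (χ : L →+ N) (v : L) :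
    latticeDualAction N g χ v = χ ⟨g.1.symm v.1, symm_apply_mem_of_mem_latticeStabilizer g v.2⟩ :=
  rfl

lemma latticeDualAction_injective {M : Type*} [AddCommGroup M]
    (hL : Submodule.span R (L : Set E) = ⊤) (hsep : ∀ v : L, (∀ χ : L →+ M, χ v = 0) → v = 0) :
    Function.Injective (latticeDualAction (R := R) (L := L) M) := by
  refine (injective_iff_map_eq_one _).mpr fun g hg => ?_
  have hfix : ∀ v ∈ L, g.1.symm v = v := fun v hv => by
    have := hsep (⟨g.1.symm v, symm_apply_mem_of_mem_latticeStabilizer g hv⟩ - ⟨v, hv⟩) fun χ => by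
      rw [map_sub, sub_eq_zero]
      exact DFunLike.congr_fun (Equiv.congr_fun hg χ) ⟨v, hv⟩
    simpa [sub_eq_zero] using this
  have hinv : g.1⁻¹ = 1 := LinearEquiv.toLinearMap_injective <| LinearMap.ext_on hL hfix
  exact Subtype.ext (inv_eq_one.mp hinv)

end Lattice

section Reflection

variable {F : Type*} [NormedAddCommGroup F] [InnerProductSpace ℝ F] {α : F}

lemma reflection_involutive {g : F → F} (hα : α ≠ 0)
    (hg : ∀ β, g β = β - (2 * ⟪α, β⟫ / ⟪α, α⟫) • α) (β : F) : g (g β) = β := by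
  have hαα : ⟪α, α⟫ ≠ 0 := inner_self_ne_zero.mpr hα
  rw [hg (g β), hg β, inner_sub_right, real_inner_smul_right, div_mul_cancel₀ _ hαα]
  module

lemma symm_apply_eq_of_reflection {g : F ≃ₗ[ℝ] F} (hα : α ≠ 0)
    (hg : ∀ β, g β = β - (2 * ⟪α, β⟫ / ⟪α, α⟫) • α) (β : F) : g.symm β = g β :=
  g.symm_apply_eq.mpr (reflection_involutive hα hg β).symm

lemma reflection_mem_of_coroot_mem {L : AddSubgroup F} (hcoroot : (2 / ⟪α, α⟫) • α ∈ L)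
    {v : F} (hv : v ∈ L) {k : ℤ} (hk : ⟪α, v⟫ = k) :
    v - (2 * ⟪α, v⟫ / ⟪α, α⟫) • α ∈ L := by
  have : (2 * ⟪α, v⟫ / ⟪α, α⟫) • α = k • ((2 / ⟪α, α⟫) • α) := by
    rw [hk, ← Int.cast_smul_eq_zsmul ℝ, smul_smul]
    congr 1
    ring
  rw [this]
  exact L.sub_mem hv (L.zsmul_mem hcoroot k)

def IsLatticeRoot (L : AddSubgroup F) (α : F) : Prop :=
  (2 / ⟪α, α⟫) • α ∈ L ∧ ∀ v ∈ L, ∃ k : ℤ, ⟪α, v⟫ = k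

lemma mem_latticeStabilizer_of_reflection {g : F ≃ₗ[ℝ] F} (hα : α ≠ 0)
    (hg : ∀ β, g β = β - (2 * ⟪α, β⟫ / ⟪α, α⟫) • α) {L : AddSubgroup F}
    (hroot : IsLatticeRoot L α) : g ∈ latticeStabilizer L := by
  have hmaps : ∀ v ∈ L, g v ∈ L := fun v hv => by
    obtain ⟨k, hk⟩ := hroot.2 v hv
    rw [hg]
    exact reflection_mem_of_coroot_mem hroot.1 hv hk
  refine fun v => ⟨fun hv => ?_, hmaps v⟩
  simpa [reflection_involutive hα hg] using hmaps _ hv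

end Reflection

section F4

abbrev E4 := EuclideanSpace ℝ (Fin 4)

def toE4 : (Fin 4 → ℤ) →+ E4 where
  toFun n := WithLp.toLp 2 fun i => (n i : ℝ)
  map_zero' := by ext; simp
  map_add' m n := by ext; simp

@[simp]
lemma toE4_apply (n : Fin 4 → ℤ) (i : Fin 4) : toE4 n i = n i := rfl

lemma toE4_injective : Function.Injective toE4 := fun m n h => funext fun i => by
  simpa using congrArg (· i) h

lemma inner_toE4 (m n : Fin 4 → ℤ) : ⟪toE4 m, toE4 n⟫ = ((∑ i, m i * n i : ℤ) : ℝ) := by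
  simp [PiLp.inner_apply, mul_comm]

lemma e4_eq_toE4 (j : Fin 4) : e4 j = toE4 (Pi.single j 1) := by
  ext i; simp [e4, Pi.single_apply]

def D4Lattice : AddSubgroup E4 := (evenSumLattice (Fin 4)).map toE4

lemma toE4_mem_D4Lattice {n : Fin 4 → ℤ} : toE4 n ∈ D4Lattice ↔ Even (∑ i, n i) :=
  AddSubgroup.mem_map_iff_mem toE4_injective

lemma span_D4Lattice : Submodule.span ℝ (D4Lattice : Set E4) = ⊤ := by
  rw [eq_top_iff, ← (EuclideanSpace.basisFun (Fin 4) ℝ).toBasis.span_eq, Submodule.span_le]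
  rintro _ ⟨j, rfl⟩
  have h2 : toE4 (Pi.single j 2) ∈ D4Lattice := toE4_mem_D4Lattice.mpr (by simp)
  have : (EuclideanSpace.basisFun (Fin 4) ℝ).toBasis j = (1 / 2 : ℝ) • toE4 (Pi.single j 2) := by
    ext i; by_cases h : i = j <;> simp [h]
  rw [this]
  exact Submodule.smul_mem _ _ (Submodule.subset_span h2)

lemma two_div_inner_toE4_self {w : Fin 4 → ℤ} {c : ℤ} (hc : c * ∑ i, w i * w i = 2) :
    2 / ⟪toE4 w, toE4 w⟫ = c := by
  have hS : ((∑ i, w i * w i : ℤ) : ℝ) ≠ 0 := by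
    intro h
    rw [Int.cast_eq_zero.mp h, mul_zero] at hc
    exact two_ne_zero hc.symm
  rw [inner_toE4, div_eq_of_eq_mul (c := (c : ℝ)) hS (by exact_mod_cast hc.symm)]

lemma reflection_formula_toE4 (w n : Fin 4 → ℤ) {c : ℤ} (hc : c * ∑ i, w i * w i = 2) :
    toE4 n - (2 * ⟪toE4 w, toE4 n⟫ / ⟪toE4 w, toE4 w⟫) • toE4 w
      = toE4 (n - (c * ∑ i, w i * n i) • w) := by
  rw [mul_div_right_comm, two_div_inner_toE4_self hc, inner_toE4]
  ext k; simp

lemma isLatticeRoot_toE4 (w : Fin 4 → ℤ) {c : ℤ} (hc : c * ∑ i, w i * w i = 2)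
    (heven : Even (c * ∑ i, w i)) : IsLatticeRoot D4Lattice (toE4 w) := by
  refine ⟨?_, ?_⟩
  · have : (2 / ⟪toE4 w, toE4 w⟫) • toE4 w = toE4 (c • w) := by
      rw [two_div_inner_toE4_self hc]
      ext i; simp
    rw [this, toE4_mem_D4Lattice]
    simpa [mul_sum] using heven
  · rintro _ ⟨n, -, rfl⟩
    exact ⟨_, inner_toE4 w n⟩

lemma isLatticeRoot_half_toE4 {η : Fin 4 → ℤ} (hη : ∀ i, η i = 1 ∨ η i = -1) :
    IsLatticeRoot D4Lattice ((1 / 2 : ℝ) • toE4 η) := by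
  have hodd : ∀ i, Odd (η i) := fun i => by rcases hη i with h | h <;> simp [h]
  have hsq : ∀ i, η i * η i = 1 := fun i => by rcases hη i with h | h <;> simp [h]
  have hnorm : ⟪(1 / 2 : ℝ) • toE4 η, (1 / 2 : ℝ) • toE4 η⟫ = 1 := by
    rw [real_inner_smul_left, real_inner_smul_right, inner_toE4]
    norm_num [hsq]
  refine ⟨?_, ?_⟩
  · rw [hnorm, smul_smul, show (2 / 1 * (1 / 2) : ℝ) = 1 by norm_num, one_smul]
    exact toE4_mem_D4Lattice.mpr <| by simpa using (even_sum_mul_iff hodd (n := 1)).mpr (by decide)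
  · rintro _ ⟨n, hn, rfl⟩
    obtain ⟨k, hk⟩ := (even_sum_mul_iff hodd).mpr hn
    refine ⟨k, ?_⟩
    rw [real_inner_smul_left, inner_toE4, hk]
    push_cast; ring

lemma exists_int_eq_of_eq_one_or_neg_one {x : ℝ} (hx : x = 1 ∨ x = -1) :
    ∃ k : ℤ, (k = 1 ∨ k = -1) ∧ x = k := by
  rcases hx with rfl | rfl
  exacts [⟨1, by simp⟩, ⟨-1, by simp⟩]

lemma isLatticeRoot_of_mem_F4Roots {α : E4} (hα : α ∈ F4Roots) : IsLatticeRoot D4Lattice α := by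
  rcases hα with ⟨j, rfl | rfl⟩ | ⟨ε, hε, rfl⟩ | ⟨j, k, hjk, a, b, ha, hb, rfl⟩
  · rw [e4_eq_toE4]
    exact isLatticeRoot_toE4 _ (c := 2) (by simp [Pi.single_apply]) (by simp)
  · rw [e4_eq_toE4, ← map_neg, ← Pi.single_neg]
    exact isLatticeRoot_toE4 _ (c := 2) (by simp [Pi.single_apply]) (by simp)
  · choose η hη hεη using fun i => exists_int_eq_of_eq_one_or_neg_one (hε i)
    have : ∑ i, ε i • e4 i = toE4 η := by
      ext i; simp [e4, hεη, Pi.single_apply]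
    rw [this]
    exact isLatticeRoot_half_toE4 hη
  · obtain ⟨a, ha', rfl⟩ := exists_int_eq_of_eq_one_or_neg_one ha
    obtain ⟨b, hb', rfl⟩ := exists_int_eq_of_eq_one_or_neg_one hb
    have : (a : ℝ) • e4 j + (b : ℝ) • e4 k = toE4 (Pi.single j a + Pi.single k b) := by
      ext i; simp [e4, Pi.single_apply]
    rw [this]
    refine isLatticeRoot_toE4 _ (c := 1) ?_ ?_
    all_goals rcases ha' with rfl | rfl <;> rcases hb' with rfl | rfl <;>
      simp [Pi.single_apply, mul_add, sum_add_distrib, hjk.ne, hjk.ne']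

lemma WF4_le_latticeStabilizer : WF4 ≤ latticeStabilizer D4Lattice :=
  Subgroup.closure_le _ |>.mpr fun _ ⟨_, hα, hα0, hg⟩ =>
    mem_latticeStabilizer_of_reflection hα0 hg (isLatticeRoot_of_mem_F4Roots hα)

end F4

section Action

lemma isSquare_units {K : Type*} [Field K] [IsAlgClosed K] (x : Kˣ) : IsSquare x := by
  obtain ⟨z, hz⟩ := IsAlgClosed.exists_eq_mul_self (x : K)
  have hz0 : z ≠ 0 := by rintro rfl; simp at hz
  exact ⟨Units.mk0 z hz0, Units.ext (by simp [hz])⟩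

lemma not_isOfFinOrder_two {K : Type*} [Field K] [CharZero K] :
    ¬IsOfFinOrder (Units.mk0 (2 : K) two_ne_zero) := by
  intro h
  obtain ⟨n, hn, h⟩ := isOfFinOrder_iff_pow_eq_one.mp h
  have : 2 ^ n = 1 := Nat.cast_injective (R := K) (by simpa using congrArg Units.val h)
  exact (Nat.one_lt_two_pow hn.ne').ne' this

noncomputable def latticeEquiv : evenSumLattice (Fin 4) ≃+ D4Lattice :=
  AddSubgroup.equivMapOfInjective _ _ toE4_injective

def quotToTorus (a : ℂˣ) : CStar4Quot → (evenSumLattice (Fin 4) →+ Additive ℂˣ) :=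
  Quotient.lift (fun z => torusChar fun i => z i * a⁻¹) <| by
    rintro z _ (rfl | rfl)
    · rfl
    · simpa [neg_mul, Pi.neg_def] using (torusChar_neg fun i => z i * a⁻¹).symm

lemma quotToTorus_mk (a : ℂˣ) (z : Fin 4 → ℂˣ) :
    quotToTorus a (Quotient.mk negSetoid z) = torusChar fun i => z i * a⁻¹ := rfl

lemma quotToTorus_bijective (a : ℂˣ) : Function.Bijective (quotToTorus a) := by
  refine ⟨fun p q => ?_, fun χ => ?_⟩
  · induction p using Quotient.inductionOn with | h z => ?_
    induction q using Quotient.inductionOn with | h w => ?_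
    intro h
    apply Quotient.sound
    rcases torusChar_eq_torusChar_iff.mp h with h | h
    · exact Or.inl <| funext fun i => mul_right_cancel (congrFun h i)
    · exact Or.inr <| funext fun i => mul_right_cancel (a := w i) (b := a⁻¹) <| by
        simpa [neg_mul] using congrFun h i
  · obtain ⟨u, rfl⟩ := torusChar_surjective (G := ℂˣ) (fun x => isSquare_units x) χ
    exact ⟨Quotient.mk negSetoid fun i => u i * a, by simp [quotToTorus_mk]⟩

noncomputable def quotEquivCharacters (a : ℂˣ) : CStar4Quot ≃ (D4Lattice →+ Additive ℂˣ) :=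
  (Equiv.ofBijective _ (quotToTorus_bijective a)).trans latticeEquiv.addMonoidHomCongrLeftEquiv

lemma quotEquivCharacters_mk_apply (a : ℂˣ) (z : Fin 4 → ℂˣ) (n : evenSumLattice (Fin 4)) :
    quotEquivCharacters a (Quotient.mk negSetoid z) (latticeEquiv n)
      = monomialChar (fun i => z i * a⁻¹) n := by
  change quotToTorus a (Quotient.mk negSetoid z) (latticeEquiv.symm (latticeEquiv n)) = _
  rw [AddEquiv.symm_apply_apply]
  rfl

noncomputable def wf4Action (a : ℂˣ) : WF4 →* Equiv.Perm CStar4Quot :=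
  (quotEquivCharacters a).symm.permCongrHom.toMonoidHom.comp <|
    (latticeDualAction (Additive ℂˣ)).comp (Subgroup.inclusion WF4_le_latticeStabilizer)

lemma eq_zero_of_forall_char_D4Lattice_eq_zero (v : D4Lattice)
    (hv : ∀ χ : D4Lattice →+ Additive ℂˣ, χ v = 0) : v = 0 := by
  have := eq_zero_of_forall_monomialChar_eq_zero not_isOfFinOrder_two
    fun u => hv ((torusChar u).comp latticeEquiv.symm.toAddMonoidHom)
  simpa using congrArg latticeEquiv (Subtype.ext this : latticeEquiv.symm v = 0)

lemma wf4Action_injective (a : ℂˣ) : Function.Injective (wf4Action a) :=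
  (quotEquivCharacters a).symm.permCongrHom.injective.comp <|
    (latticeDualAction_injective span_D4Lattice eq_zero_of_forall_char_D4Lattice_eq_zero).comp
      (Subgroup.inclusion_injective WF4_le_latticeStabilizer)

lemma wf4Action_mk {a : ℂˣ} {g : E4 ≃ₗ[ℝ] E4} (hg : g ∈ WF4) {z z' : Fin 4 → ℂˣ}
    (f : (Fin 4 → ℤ) → Fin 4 → ℤ)
    (hf : ∀ n ∈ evenSumLattice (Fin 4), g.symm (toE4 n) = toE4 (f n))
    (hz : ∀ n ∈ evenSumLattice (Fin 4),
      monomialChar (fun i => z i * a⁻¹) (f n) = monomialChar (fun i => z' i * a⁻¹) n) :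
    wf4Action a ⟨g, hg⟩ (Quotient.mk negSetoid z) = Quotient.mk negSetoid z' := by
  refine (Equiv.symm_apply_eq (quotEquivCharacters a)).mpr (AddMonoidHom.ext fun v => ?_)
  obtain ⟨n, rfl⟩ := latticeEquiv.surjective v
  have hmem := symm_apply_mem_of_mem_latticeStabilizer ⟨g, WF4_le_latticeStabilizer hg⟩
    (latticeEquiv n).2
  have hfn : f n ∈ evenSumLattice (Fin 4) := toE4_mem_D4Lattice.mp (hf n n.2 ▸ hmem)
  have hact : latticeEquiv ⟨f n, hfn⟩ = ⟨_, hmem⟩ := Subtype.ext (hf n n.2).symm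
  change latticeDualAction _ ⟨g, _⟩ (quotEquivCharacters a _) _ = _
  rw [latticeDualAction_apply, ← hact, quotEquivCharacters_mk_apply, quotEquivCharacters_mk_apply]
  exact hz n n.2

lemma wf4Action_of_reflection_sub (a : ℂˣ) {i j : Fin 4} (hij : i ≠ j) {g : E4 ≃ₗ[ℝ] E4}
    (hg : g ∈ WF4)
    (hform : ∀ β, g β = β - (2 * ⟪e4 i - e4 j, β⟫ / ⟪e4 i - e4 j, e4 i - e4 j⟫) • (e4 i - e4 j))
    (z : Fin 4 → ℂˣ) :
    wf4Action a ⟨g, hg⟩ (Quotient.mk negSetoid z) = Quotient.mk negSetoid (z ∘ Equiv.swap i j) := by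
  have hα : e4 i - e4 j ≠ 0 := by
    rw [sub_ne_zero, e4_eq_toE4, e4_eq_toE4, toE4_injective.ne_iff]
    exact fun h => hij (by simpa [Pi.single_apply, eq_comm] using congrFun h i)
  refine wf4Action_mk hg (fun n => n ∘ Equiv.swap i j) (fun n _ => ?_) (fun n _ => ?_)
  · rw [symm_apply_eq_of_reflection hα hform, hform, e4_eq_toE4, e4_eq_toE4, ← map_sub,
      reflection_formula_toE4 _ _ (c := 1) (by simp [Pi.single_apply, mul_sub, hij, hij.symm])]
    congr 1
    ext k
    rw [Function.comp_apply, Equiv.swap_apply_def]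
    split_ifs <;> subst_vars <;> simp [Pi.single_apply, sub_mul, hij.symm, *]
  · rw [monomialChar_comp_perm, Equiv.symm_swap]
    rfl

lemma wf4Action_of_reflection_neg {a A : ℂˣ} (ha : a ^ 2 = A) (i : Fin 4) {g : E4 ≃ₗ[ℝ] E4}
    (hg : g ∈ WF4) (hform : ∀ β, g β = β - (2 * ⟪-e4 i, β⟫ / ⟪-e4 i, -e4 i⟫) • (-e4 i))
    (z : Fin 4 → ℂˣ) :
    wf4Action a ⟨g, hg⟩ (Quotient.mk negSetoid z)
      = Quotient.mk negSetoid (Function.update z i (A * (z i)⁻¹)) := by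
  have hα : -e4 i ≠ 0 := by simp [e4]
  refine wf4Action_mk hg (fun n => Function.update n i (-n i)) (fun n _ => ?_) (fun n _ => ?_)
  · rw [symm_apply_eq_of_reflection hα hform, hform, e4_eq_toE4, ← map_neg,
      reflection_formula_toE4 _ _ (c := 2) (by simp [Pi.single_apply])]
    congr 1
    ext k
    rcases eq_or_ne k i with rfl | hki <;> simp [Pi.single_apply, two_mul, *]
  · rw [monomialChar_update_neg]
    refine congrArg (fun u => monomialChar u n) (funext fun k => Units.ext ?_)
    rcases eq_or_ne k i with rfl | hki
    · rw [Function.update_self, Function.update_self, ← ha]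
      push_cast
      field_simp
    · simp [hki]

lemma wf4Action_of_reflection_half_sum {a A : ℂˣ} (ha : a ^ 2 = A) {g : E4 ≃ₗ[ℝ] E4}
    (hg : g ∈ WF4)
    (hform : ∀ β, let δ := (1 / 2 : ℝ) • (e4 0 + e4 1 + e4 2 + e4 3);
      g β = β - (2 * ⟪δ, β⟫ / ⟪δ, δ⟫) • δ)
    (z : Fin 4 → ℂˣ) (s : ℂˣ) (hs : s ^ 2 = z 0 * z 1 * z 2 * z 3) :
    wf4Action a ⟨g, hg⟩ (Quotient.mk negSetoid z)
      = Quotient.mk negSetoid (fun j => A * z j * s⁻¹) := by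
  have hδ : e4 0 + e4 1 + e4 2 + e4 3 = toE4 1 := by
    ext i; fin_cases i <;> simp [e4]
  have hnorm : ⟪(1 / 2 : ℝ) • toE4 1, (1 / 2 : ℝ) • toE4 1⟫ = 1 := by
    rw [real_inner_smul_left, real_inner_smul_right, inner_toE4]; norm_num
  have hα : (1 / 2 : ℝ) • toE4 1 ≠ 0 := by
    intro h; rw [h, inner_zero_left] at hnorm; exact zero_ne_one hnorm
  rw [hδ] at hform
  refine wf4Action_mk hg (fun n => n - fun _ => (∑ i, n i) / 2) (fun n hn => ?_) (fun n hn => ?_)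
  · rw [symm_apply_eq_of_reflection hα hform, hform, hnorm, real_inner_smul_left, inner_toE4]
    ext k
    simp [Int.cast_div (even_iff_two_dvd.mp hn) (two_ne_zero' ℝ), div_eq_mul_inv]
  -- `s / a²` is a square root of `∏ᵢ (zᵢ / a)`
  · rw [monomialChar_sub_const _ (Int.two_mul_ediv_two_of_even hn).symm (t := s * (a ^ 2)⁻¹)]
    · refine congrArg (fun u => monomialChar u n) (funext fun k => Units.ext ?_)
      rw [← ha]
      push_cast
      field_simp
    · apply Units.ext
      have hs' : (s : ℂ) ^ 2 = z 0 * z 1 * z 2 * z 3 := by exact_mod_cast congrArg Units.val hs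
      simp only [Units.val_pow_eq_pow_val, Units.val_mul, Fin.prod_univ_four,
        Units.val_inv_eq_inv_val, mul_pow, hs']
      field_simp

end Action

end WeylF4

/-- For any nonzero constant `A`, the multiplicative action of `W(F₄)` on `(ℂ*)⁴/∼`,
given on the simple reflections by: `s_{e₁−e₂}` swaps `z₁, z₂`; `s_{e₂−e₃}` swaps
`z₂, z₃`; `s_{−e₁}` maps `z₁ ↦ A/z₁`; and `s_{(e₁+e₂+e₃+e₄)/2}` maps each
`z_j ↦ A z_j / √(z₁z₂z₃z₄)` (for either choice of the square root), is a well-defined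
faithful group action: there is an injective group homomorphism `W(F₄) → Perm((ℂ*)⁴/∼)`
whose values on the simple reflections are the indicated maps. -/
theorem WF4_multiplicative_action_faithful (A : ℂˣ) :
    ∃ φ : WF4 →* Equiv.Perm CStar4Quot,
      Function.Injective φ ∧
      (∀ (g : EuclideanSpace ℝ (Fin 4) ≃ₗ[ℝ] EuclideanSpace ℝ (Fin 4)) (hg : g ∈ WF4),
        (∀ β, g β = β - (2 * ⟪e4 0 - e4 1, β⟫ / ⟪e4 0 - e4 1, e4 0 - e4 1⟫) • (e4 0 - e4 1)) →
        ∀ z : Fin 4 → ℂˣ,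
          φ ⟨g, hg⟩ (Quotient.mk negSetoid z)
            = Quotient.mk negSetoid (z ∘ Equiv.swap 0 1)) ∧
      (∀ (g : EuclideanSpace ℝ (Fin 4) ≃ₗ[ℝ] EuclideanSpace ℝ (Fin 4)) (hg : g ∈ WF4),
        (∀ β, g β = β - (2 * ⟪e4 1 - e4 2, β⟫ / ⟪e4 1 - e4 2, e4 1 - e4 2⟫) • (e4 1 - e4 2)) →
        ∀ z : Fin 4 → ℂˣ,
          φ ⟨g, hg⟩ (Quotient.mk negSetoid z)
            = Quotient.mk negSetoid (z ∘ Equiv.swap 1 2)) ∧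
      (∀ (g : EuclideanSpace ℝ (Fin 4) ≃ₗ[ℝ] EuclideanSpace ℝ (Fin 4)) (hg : g ∈ WF4),
        (∀ β, g β = β - (2 * ⟪-e4 0, β⟫ / ⟪-e4 0, -e4 0⟫) • (-e4 0)) →
        ∀ z : Fin 4 → ℂˣ,
          φ ⟨g, hg⟩ (Quotient.mk negSetoid z)
            = Quotient.mk negSetoid (Function.update z 0 (A * (z 0)⁻¹))) ∧
      (∀ (g : EuclideanSpace ℝ (Fin 4) ≃ₗ[ℝ] EuclideanSpace ℝ (Fin 4)) (hg : g ∈ WF4),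
        (∀ β, let δ := (1 / 2 : ℝ) • (e4 0 + e4 1 + e4 2 + e4 3);
          g β = β - (2 * ⟪δ, β⟫ / ⟪δ, δ⟫) • δ) →
        ∀ (z : Fin 4 → ℂˣ) (s : ℂˣ), s ^ 2 = z 0 * z 1 * z 2 * z 3 →
          φ ⟨g, hg⟩ (Quotient.mk negSetoid z)
            = Quotient.mk negSetoid (fun j => A * z j * s⁻¹)) := by
  obtain ⟨a, rfl⟩ : ∃ a : ℂˣ, a ^ 2 = A := by
    obtain ⟨a, ha⟩ := WeylF4.isSquare_units A
    exact ⟨a, by rw [sq, ha]⟩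
  exact ⟨WeylF4.wf4Action a, WeylF4.wf4Action_injective a,
    fun g hg => WeylF4.wf4Action_of_reflection_sub a (by decide) hg,
    fun g hg => WeylF4.wf4Action_of_reflection_sub a (by decide) hg,
    fun g hg => WeylF4.wf4Action_of_reflection_neg rfl 0 hg,
    fun g hg => WeylF4.wf4Action_of_reflection_half_sum rfl hg⟩
end

section
/- Fix |q| < 1, q fixed, z ∈ ℂ nonzero, and α ∈ [0,1]. Then as real p → 0^+, the elliptic gamma function satisfies: lim_{p→0} Γ(p^α z; p,q) = 1/(z;q)_∞ if α = 0 (assuming (z;q)_∞ ≠ 0); lim_{p→0} Γ(p^α z; p,q) = 1 if 0 < α < 1; and lim_{p→0} Γ(pz; p,q) = (q/z; q)_∞ if α = 1. -/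
open Filter

/-- The infinite q-shifted factorial `(x;q)_∞`. -/
noncomputable def qPochInf (x q : ℂ) : ℂ := ∏' r : ℕ, (1 - x * q ^ r)

/-- The double infinite product `(x;p,q) = ∏_{r,s=0}^∞ (1 - x p^r q^s)`. -/
noncomputable def pqPoch (x p q : ℂ) : ℂ := ∏' rs : ℕ × ℕ, (1 - x * p ^ rs.1 * q ^ rs.2)

/-- The elliptic gamma function `Γ(x;p,q) = (pq/x;p,q)/(x;p,q)`. -/
noncomputable def ellGamma (x p q : ℂ) : ℂ := pqPoch (p * q / x) p q / pqPoch x p q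

open Topology

/-!
As `p → 0` every factor `1 - x p^r q^s` with `r > 0` tends to `1`, dominated by a multiple of
`2^{-r} |q|^s`, so dominated convergence for infinite products gives `(x;p,q) → (x₀;q)_∞` whenever
`x → x₀`. Both arguments of `Γ(x;p,q) = (pq/x;p,q)/(x;p,q)` are then tracked: `p^α z` tends to
`z` or `0`, while `pq/(p^α z) = p^{1-α} q/z` tends to `0` for `α < 1` and to `q/z` for `α = 1`.
-/

@[simp]
lemma qPochInf_zero (q : ℂ) : qPochInf 0 q = 1 := by
  simp [qPochInf]

lemma pqPoch_zero_eq_qPochInf (x q : ℂ) : pqPoch x 0 q = qPochInf x q := by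
  rw [pqPoch, ← (Prod.mk_right_injective 0).tprod_eq]
  · simp [qPochInf]
  · rintro ⟨r, s⟩ hrs
    obtain rfl : r = 0 := by
      by_contra hr
      exact hrs (by simp [zero_pow hr])
    exact ⟨s, rfl⟩

theorem tendsto_pqPoch {ι : Type*} {l : Filter ι} {q : ℂ} (hq : ‖q‖ < 1) {x p : ι → ℂ}
    {x₀ : ℂ} (hx : Tendsto x l (𝓝 x₀)) (hp : Tendsto p l (𝓝 0)) :
    Tendsto (fun i => pqPoch (x i) (p i) q) l (𝓝 (qPochInf x₀ q)) := by
  have bound_summable :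
      Summable fun rs : ℕ × ℕ => (‖x₀‖ + 1) * ((1 / 2 : ℝ) ^ rs.1 * ‖q‖ ^ rs.2) :=
    .mul_left _ <| .mul_of_nonneg summable_geometric_two
      (summable_geometric_of_lt_one (norm_nonneg q) hq) (fun _ => by positivity)
      (fun _ => by positivity)
  have factor_tendsto : ∀ rs : ℕ × ℕ, Tendsto (fun i => -(x i * p i ^ rs.1 * q ^ rs.2)) l
      (𝓝 (-(x₀ * 0 ^ rs.1 * q ^ rs.2))) := fun rs =>
    ((hx.mul (hp.pow rs.1)).mul_const _).neg
  have factor_le : ∀ᶠ i in l, ∀ rs : ℕ × ℕ,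
      ‖-(x i * p i ^ rs.1 * q ^ rs.2)‖ ≤ (‖x₀‖ + 1) * ((1 / 2 : ℝ) ^ rs.1 * ‖q‖ ^ rs.2) := by
    filter_upwards [hx.norm.eventually (gt_mem_nhds (lt_add_one ‖x₀‖)),
      hp.norm.eventually (gt_mem_nhds (by norm_num : ‖(0 : ℂ)‖ < 1 / 2))] with i hxi hpi rs
    rw [norm_neg, norm_mul, norm_mul, norm_pow, norm_pow, mul_assoc]
    gcongr
  simpa only [pqPoch, ← pqPoch_zero_eq_qPochInf, ← sub_eq_add_neg] using
    tendsto_tprod_one_add_of_dominated_convergence bound_summable factor_tendsto factor_le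

theorem tendsto_ellGamma {ι : Type*} {l : Filter ι} {q : ℂ} (hq : ‖q‖ < 1) {x p : ι → ℂ}
    {x₀ y₀ : ℂ} (hx : Tendsto x l (𝓝 x₀)) (hp : Tendsto p l (𝓝 0))
    (hy : Tendsto (fun i => p i * q / x i) l (𝓝 y₀)) (hx₀ : qPochInf x₀ q ≠ 0) :
    Tendsto (fun i => ellGamma (x i) (p i) q) l (𝓝 (qPochInf y₀ q / qPochInf x₀ q)) :=
  (tendsto_pqPoch hq hy hp).div (tendsto_pqPoch hq hx hp) hx₀

lemma tendsto_ofReal_rpow_nhdsGT_zero {β : ℝ} (hβ : 0 < β) :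
    Tendsto (fun p : ℝ => ((p ^ β : ℝ) : ℂ)) (𝓝[>] 0) (𝓝 0) := by
  have h := (Real.continuousAt_rpow_const 0 β (Or.inr hβ.le)).tendsto
  rw [Real.zero_rpow hβ.ne'] at h
  simpa [Function.comp_def] using
    (Complex.continuous_ofReal.tendsto 0).comp (tendsto_nhdsWithin_of_tendsto_nhds h)

theorem ellGamma_limit_general (q z : ℂ) (hq : ‖q‖ < 1) (α : ℝ) :
    (α = 0 → qPochInf z q ≠ 0 →
      Tendsto (fun p : ℝ => ellGamma ((((p : ℝ) ^ α : ℝ) : ℂ) * z) (p : ℂ) q)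
        (nhdsWithin 0 (Set.Ioi 0)) (nhds (1 / qPochInf z q))) ∧
    (0 < α → α < 1 →
      Tendsto (fun p : ℝ => ellGamma ((((p : ℝ) ^ α : ℝ) : ℂ) * z) (p : ℂ) q)
        (nhdsWithin 0 (Set.Ioi 0)) (nhds 1)) ∧
    (α = 1 →
      Tendsto (fun p : ℝ => ellGamma ((p : ℂ) * z) (p : ℂ) q)
        (nhdsWithin 0 (Set.Ioi 0)) (nhds (qPochInf (q / z) q))) := by
  have hp : Tendsto (fun p : ℝ => (p : ℂ)) (𝓝[>] 0) (𝓝 0) := by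
    simpa using tendsto_nhdsWithin_of_tendsto_nhds (Complex.continuous_ofReal.tendsto 0)
  refine ⟨?_, fun hα₀ hα₁ => ?_, fun _ => ?_⟩
  · rintro rfl hz
    simpa using tendsto_ellGamma (y₀ := 0) hq tendsto_const_nhds hp
      (by simpa using (hp.mul_const q).div_const z) hz
  · have hy : Tendsto (fun p : ℝ => p * q / ((p ^ α : ℝ) * z)) (𝓝[>] 0) (𝓝 0) := by
      have h := (tendsto_ofReal_rpow_nhdsGT_zero (sub_pos.2 hα₁)).mul_const (q / z)
      rw [zero_mul] at h
      refine h.congr' ?_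
      filter_upwards [self_mem_nhdsWithin] with p (hp : 0 < p)
      rw [Real.rpow_sub hp, Real.rpow_one, Complex.ofReal_div, mul_div_mul_comm]
    simpa using tendsto_ellGamma (x₀ := 0) (y₀ := 0) hq
      (by simpa using (tendsto_ofReal_rpow_nhdsGT_zero hα₀).mul_const z) hp hy (by simp)
  · have hy : Tendsto (fun p : ℝ => p * q / (p * z)) (𝓝[>] 0) (𝓝 (q / z)) := by
      refine tendsto_const_nhds.congr' ?_
      filter_upwards [self_mem_nhdsWithin] with p (hp : 0 < p)
      exact (mul_div_mul_left q z (Complex.ofReal_ne_zero.2 hp.ne')).symm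
    simpa using tendsto_ellGamma (x₀ := 0) hq (by simpa using hp.mul_const z) hp hy
      (by simp)

/-- Elementary limits of the elliptic gamma function as real `p → 0⁺`, for `0 ≤ α ≤ 1`:
`lim Γ(p^α z;p,q)` equals `1/(z;q)_∞` if `α = 0`, `1` if `0 < α < 1`, and `(q/z;q)_∞`
if `α = 1`. -/
theorem ellGamma_limit (q z : ℂ) (hq : ‖q‖ < 1) (hz : z ≠ 0)
    (α : ℝ) (h0 : 0 ≤ α) (h1 : α ≤ 1) :
    (α = 0 → qPochInf z q ≠ 0 →
      Tendsto (fun p : ℝ => ellGamma ((((p : ℝ) ^ α : ℝ) : ℂ) * z) (p : ℂ) q)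
        (nhdsWithin 0 (Set.Ioi 0)) (nhds (1 / qPochInf z q))) ∧
    (0 < α → α < 1 →
      Tendsto (fun p : ℝ => ellGamma ((((p : ℝ) ^ α : ℝ) : ℂ) * z) (p : ℂ) q)
        (nhdsWithin 0 (Set.Ioi 0)) (nhds 1)) ∧
    (α = 1 →
      Tendsto (fun p : ℝ => ellGamma ((p : ℂ) * z) (p : ℂ) q)
        (nhdsWithin 0 (Set.Ioi 0)) (nhds (qPochInf (q / z) q))) :=
  ellGamma_limit_general q z hq α
end
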